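/- Consider the 8×8 linear system in the Christoffel symbols Γ^k_{ij} (not assumed symmetric in i,j) given by ∂ₗa_{ijk} + Γ^i_{lm}a_{mjk} + Γ^j_{lm}a_{imk} + Γ^k_{lm}a_{ijm} = 0 for a symmetric 3-tensor a on ℝ². The determinant of the coefficient matrix of this linear system equals 81·Δ(σ)², where Δ(σ) is the discriminant invariant of the cubic with coefficients a₁ = a₁₁₁, a₂ = a₁₁₂, a₃ = a₁₂₂, a₄ = a₂₂₂. Consequently, if Δ(σ) ≠ 0, the Wagner connection exists and is unique. -/

import Mathlib

/-- The discriminant invariant of the binary cubic with coefficients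
`(a₁,a₂,a₃,a₄)`. -/
def Delta (a1 a2 a3 a4 : ℝ) : ℝ :=
  6*a1*a2*a3*a4 - 4*(a1*a3^3 + a2^3*a4) + 3*a2^2*a3^2 - a1^2*a4^2

/-- Components of the symmetric 3-tensor determined by `(a₁,a₂,a₃,a₄)`:
`a_{ijk} = a_{1+#{2's}}`. -/
def cf (a1 a2 a3 a4 : ℝ) (i j k : Fin 2) : ℝ :=
  match i.val + j.val + k.val with
  | 0 => a1
  | 1 => a2
  | 2 => a3
  | _ => a4

/-- The four symmetric index triples `(111),(112),(122),(222)`. -/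
def trip : Fin 4 → Fin 2 × Fin 2 × Fin 2 := ![(0,0,0), (0,0,1), (0,1,1), (1,1,1)]

/-- The four pairs `(u,m)` indexing the unknowns `Γ^u_{lm}` within a block. -/
def pr : Fin 4 → Fin 2 × Fin 2 := ![(0,0), (0,1), (1,0), (1,1)]

/-- The 8×8 coefficient matrix of the linear system
`Γ^i_{lm}a_{mjk} + Γ^j_{lm}a_{imk} + Γ^k_{lm}a_{ijm} = −∂ₗa_{ijk}` in the 8
unknowns `Γ^u_{l'm}`; row `r` encodes the equation `(l,(ijk))` with
`l = r/4`, `(i,j,k) = trip (r%4)`, and column `c` encodes the unknown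
`Γ^u_{l'm}` with `l' = c/4`, `(u,m) = pr (c%4)`. -/
def wagnerMatrix (a1 a2 a3 a4 : ℝ) : Matrix (Fin 8) (Fin 8) ℝ :=
  Matrix.of fun r c =>
    let l : Fin 2 := ⟨r.val / 4, by have := r.isLt; omega⟩
    let t := trip ⟨r.val % 4, by have := r.isLt; omega⟩
    let l' : Fin 2 := ⟨c.val / 4, by have := c.isLt; omega⟩
    let s := pr ⟨c.val % 4, by have := c.isLt; omega⟩
    let i := t.1; let j := t.2.1; let k := t.2.2
    let u := s.1; let m := s.2
    if l' = l then
      (if i = u then cf a1 a2 a3 a4 m j k else 0) +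
      (if j = u then cf a1 a2 a3 a4 i m k else 0) +
      (if k = u then cf a1 a2 a3 a4 i j m else 0)
    else 0

/-! In the equations indexed by `l`, only the unknowns `Γ^u_{lm}` with that same `l` occur, and
with the same coefficients for both values of `l`. After reordering, the coefficient matrix is
therefore block diagonal with two copies of one 4×4 matrix, whose determinant is `9 Δ` by a
cofactor expansion. -/

theorem Matrix.existsUnique_mulVec_eq_of_isUnit {n R : Type*} [Fintype n] [DecidableEq n]
    [CommRing R] {A : Matrix n n R} (hA : IsUnit A) (v : n → R) : ∃! g, A.mulVec g = v :=
  Function.Bijective.existsUnique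
    ⟨Matrix.mulVec_injective_of_isUnit hA, Matrix.mulVec_surjective_iff_isUnit.mpr hA⟩ v

def wagnerBlock (a1 a2 a3 a4 : ℝ) : Matrix (Fin 4) (Fin 4) ℝ :=
  !![3 * a1, 3 * a2, 0, 0;
     2 * a2, 2 * a3, a1, a2;
     a3, a4, 2 * a2, 2 * a3;
     0, 0, 3 * a3, 3 * a4]

def wagnerIndexEquiv : Fin 4 × Fin 2 ≃ Fin 8 :=
  (Equiv.prodComm _ _).trans finProdFinEquiv

lemma wagnerMatrix_submatrix_wagnerIndexEquiv (a1 a2 a3 a4 : ℝ) :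
    (wagnerMatrix a1 a2 a3 a4).submatrix wagnerIndexEquiv wagnerIndexEquiv =
      Matrix.blockDiagonal fun _ => wagnerBlock a1 a2 a3 a4 := by
  ext ⟨t, l⟩ ⟨t', l'⟩
  fin_cases t <;> fin_cases l <;> fin_cases t' <;> fin_cases l' <;>
    simp [wagnerMatrix, wagnerBlock, wagnerIndexEquiv, trip, pr, cf, finProdFinEquiv,
      Matrix.blockDiagonal_apply] <;> ring

lemma det_wagnerBlock (a1 a2 a3 a4 : ℝ) :
    (wagnerBlock a1 a2 a3 a4).det = 9 * Delta a1 a2 a3 a4 := by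
  simp [wagnerBlock, Matrix.det_succ_row_zero, Fin.sum_univ_succ, Fin.succAbove, Delta]
  ring

lemma det_wagnerMatrix (a1 a2 a3 a4 : ℝ) :
    (wagnerMatrix a1 a2 a3 a4).det = 81 * Delta a1 a2 a3 a4 ^ 2 := by
  rw [← Matrix.det_submatrix_equiv_self wagnerIndexEquiv, wagnerMatrix_submatrix_wagnerIndexEquiv,
    Matrix.det_blockDiagonal, Fin.prod_univ_two, det_wagnerBlock]
  ring

/-- The determinant of the 8×8 linear system determining the
(not necessarily torsion-free) Christoffel symbols `Γ^k_{ij}` of a connection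
annihilating the symmetric 3-tensor with coefficients `(a₁,a₂,a₃,a₄)` equals
`81·Δ(σ)²`; consequently, if `Δ(σ) ≠ 0`, the system is uniquely solvable for
every right hand side, i.e. the Wagner connection exists and is unique. -/
theorem stmt8 (a1 a2 a3 a4 : ℝ) :
    (wagnerMatrix a1 a2 a3 a4).det = 81 * (Delta a1 a2 a3 a4)^2 ∧
    (Delta a1 a2 a3 a4 ≠ 0 →
      ∀ v : Fin 8 → ℝ, ∃! g : Fin 8 → ℝ, (wagnerMatrix a1 a2 a3 a4).mulVec g = v) := by
  refine ⟨det_wagnerMatrix a1 a2 a3 a4, fun hΔ => Matrix.existsUnique_mulVec_eq_of_isUnit ?_⟩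
  have hdet : (wagnerMatrix a1 a2 a3 a4).det ≠ 0 := by
    rw [det_wagnerMatrix]
    positivity
  exact (Matrix.isUnit_iff_isUnit_det _).mpr hdet.isUnit
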